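/- arXiv:2501.18302 — 2 statements merged into one kernel-verified Lean document; each statement's English description precedes it below -/
import Mathlib

section
/- Assume (v, p, θ) is an axially symmetric smooth solution of the Navier–Stokes–heat system on Ω×(0,T) with the stated boundary and initial conditions, that 0 < θ_* ≤ θ ≤ θ* on Ω×(0,T), that |α(ϑ)| ≤ M_α for ϑ ∈ [θ_*,θ*], and that f₀ = r f_φ ∈ L₁(0,T;L_∞(Ω)) and u(0) = r v_φ(·,0) ∈ L_∞(Ω). Then the swirl u = r v_φ (which vanishes at r = 0 and on S₁, and has u_{,z} = 0 on S₂) satisfies for every t ∈ (0,T): |u(t)|_{∞,Ω} ≤ M_α |f₀|_{∞,1,Ω^t} + |u(0)|_{∞,Ω}. -/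
open MeasureTheory Real Set
open scoped ENNReal

noncomputable section

/-- The half-strip `(0,R) × (-a,a)` of `(r,z)` coordinates describing the cylinder
`Ω = {x ∈ ℝ³ : x₁² + x₂² < R², |x₃| < a}`. -/
def cylStrip (R a : ℝ) : Set (ℝ × ℝ) := Ioo 0 R ×ˢ Ioo (-a) a

/-- The measure on the `(r,z)` half-strip corresponding to Lebesgue measure on the
cylinder `Ω` for axially symmetric integrands: `dμ = 2π r dr dz`. -/
def cylMeas (R a : ℝ) : Measure (ℝ × ℝ) :=
  ((volume : Measure (ℝ × ℝ)).restrict (cylStrip R a)).withDensity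
    fun q => ENNReal.ofReal (2 * π * q.1)

/-- The space-time measure corresponding to `Ω^t = Ω × (0,t)`. -/
def cylMeasT (R a t : ℝ) : Measure ((ℝ × ℝ) × ℝ) :=
  (cylMeas R a).prod (volume.restrict (Ioo 0 t))

/-- `∂_r` of a function of `(r,z,t)`. -/
def pdr (w : ℝ → ℝ → ℝ → ℝ) : ℝ → ℝ → ℝ → ℝ := fun r z t => deriv (fun s => w s z t) r
/-- `∂_z` of a function of `(r,z,t)`. -/
def pdz (w : ℝ → ℝ → ℝ → ℝ) : ℝ → ℝ → ℝ → ℝ := fun r z t => deriv (fun s => w r s t) z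
/-- `∂_t` of a function of `(r,z,t)`. -/
def pdt (w : ℝ → ℝ → ℝ → ℝ) : ℝ → ℝ → ℝ → ℝ := fun r z t => deriv (fun s => w r z s) t

/-- The spatial slice at time `t`, as a function on the `(r,z)` strip. -/
def sp (w : ℝ → ℝ → ℝ → ℝ) (t : ℝ) : ℝ × ℝ → ℝ := fun q => w q.1 q.2 t
/-- The space-time uncurrying of `w`. -/
def st (w : ℝ → ℝ → ℝ → ℝ) : (ℝ × ℝ) × ℝ → ℝ := fun q => w q.1.1 q.1.2 q.2

/-- `|w(·,t)|_{p,Ω}`. -/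
def nLp (R a : ℝ) (p : ℝ≥0∞) (w : ℝ → ℝ → ℝ → ℝ) (t : ℝ) : ℝ≥0∞ :=
  eLpNorm (sp w t) p (cylMeas R a)

/-- The energy norm `‖w‖_{V(Ω^t)} = ess sup_{t' ∈ (0,t)} |w(t')|_{2,Ω} + |∇w|_{2,Ω^t}`,
where for an axially symmetric scalar `|∇w|² = w_{,r}² + w_{,z}²`. -/
def Vnorm (R a t : ℝ) (w : ℝ → ℝ → ℝ → ℝ) : ℝ≥0∞ :=
  essSup (fun t' => nLp R a 2 w t') (volume.restrict (Ioo 0 t))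
  + eLpNorm (fun q : (ℝ × ℝ) × ℝ =>
      Real.sqrt ((pdr w q.1.1 q.1.2 q.2) ^ 2 + (pdz w q.1.1 q.1.2 q.2) ^ 2)) 2 (cylMeasT R a t)
/-- Axially symmetric smooth solution of the Navier–Stokes–heat system on the cylinder
of radius `R`, height `2a`, on the time interval `(0,T)`, written in cylindrical
coordinates `(r,z,t)`; `vr vφ vz` are the cylindrical velocity components, `pp` the
pressure, `θ` the temperature, `(fr, fφ, fz)` the external force and `g` the heat source. -/
structure NSHeat (ν κ R a T : ℝ) (α : ℝ → ℝ)
    (vr vφ vz pp θ fr fφ fz g : ℝ → ℝ → ℝ → ℝ) : Prop where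
  smooth_vr : ∀ n : ℕ, ContDiff ℝ n (fun q : ℝ × ℝ × ℝ => vr q.1 q.2.1 q.2.2)
  smooth_vφ : ∀ n : ℕ, ContDiff ℝ n (fun q : ℝ × ℝ × ℝ => vφ q.1 q.2.1 q.2.2)
  smooth_vz : ∀ n : ℕ, ContDiff ℝ n (fun q : ℝ × ℝ × ℝ => vz q.1 q.2.1 q.2.2)
  smooth_pp : ∀ n : ℕ, ContDiff ℝ n (fun q : ℝ × ℝ × ℝ => pp q.1 q.2.1 q.2.2)
  smooth_θ : ∀ n : ℕ, ContDiff ℝ n (fun q : ℝ × ℝ × ℝ => θ q.1 q.2.1 q.2.2)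
  axis_vr : ∀ z t, vr 0 z t = 0
  axis_vφ : ∀ z t, vφ 0 z t = 0
  mom_r : ∀ r z t, 0 < r → r < R → -a < z → z < a → 0 < t → t < T →
    pdt vr r z t + vr r z t * pdr vr r z t + vz r z t * pdz vr r z t - vφ r z t ^ 2 / r
      - ν * (pdr (pdr vr) r z t + pdr vr r z t / r + pdz (pdz vr) r z t)
      + ν * vr r z t / r ^ 2
      = - pdr pp r z t + α (θ r z t) * fr r z t
  mom_φ : ∀ r z t, 0 < r → r < R → -a < z → z < a → 0 < t → t < T →
    pdt vφ r z t + vr r z t * pdr vφ r z t + vz r z t * pdz vφ r z t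
      + vr r z t * vφ r z t / r
      - ν * (pdr (pdr vφ) r z t + pdr vφ r z t / r + pdz (pdz vφ) r z t)
      + ν * vφ r z t / r ^ 2
      = α (θ r z t) * fφ r z t
  mom_z : ∀ r z t, 0 < r → r < R → -a < z → z < a → 0 < t → t < T →
    pdt vz r z t + vr r z t * pdr vz r z t + vz r z t * pdz vz r z t
      - ν * (pdr (pdr vz) r z t + pdr vz r z t / r + pdz (pdz vz) r z t)
      = - pdz pp r z t + α (θ r z t) * fz r z t
  incompressible : ∀ r z t, 0 < r → r < R → -a < z → z < a → 0 < t → t < T →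
    pdr vr r z t + vr r z t / r + pdz vz r z t = 0
  heat : ∀ r z t, 0 < r → r < R → -a < z → z < a → 0 < t → t < T →
    pdt θ r z t + vr r z t * pdr θ r z t + vz r z t * pdz θ r z t
      - κ * (pdr (pdr θ) r z t + pdr θ r z t / r + pdz (pdz θ) r z t) = g r z t
  bc_lat : ∀ z t, -a ≤ z → z ≤ a → 0 < t → t < T →
    vr R z t = 0 ∧ vφ R z t = 0 ∧ pdz vr R z t - pdr vz R z t = 0
  bc_top : ∀ r t, 0 ≤ r → r ≤ R → 0 < t → t < T →
    (vz r a t = 0 ∧ pdz vr r a t - pdr vz r a t = 0 ∧ pdz vφ r a t = 0) ∧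
    (vz r (-a) t = 0 ∧ pdz vr r (-a) t - pdr vz r (-a) t = 0 ∧ pdz vφ r (-a) t = 0)
  bc_heat_lat : ∀ z t, -a ≤ z → z ≤ a → 0 < t → t < T → pdr θ R z t = 0
  bc_heat_top : ∀ r t, 0 ≤ r → r ≤ R → 0 < t → t < T →
    pdz θ r a t = 0 ∧ pdz θ r (-a) t = 0


/-!
Multiplying the `φ`-momentum equation by `r` shows that the swirl `u = r v_φ` solves
`u_t + (v_r + ν/r) u_r + v_z u_z - ν (u_rr + u_zz) = α(θ) f₀`, a drift–diffusion equation on the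
`(r,z)` rectangle whose singular drift does not matter at a critical point. As `u` vanishes on
the axis and on `S₁` and `u_z = 0` on `S₂`, the parabolic maximum principle applied to
`±u - ∫₀ˢ h - ε s`, with `h(s)` the supremum of `|α(θ) f₀(s)|`, bounds `|u(t)|` by
`sup |u(0)| + ∫₀ᵗ h`; since `u` is continuous, these suprema are `L_∞` norms.
-/

open Topology
open scoped ContDiff

def unc (w : ℝ → ℝ → ℝ → ℝ) : ℝ × ℝ × ℝ → ℝ := fun q => w q.1 q.2.1 q.2.2

section Partials

variable {w : ℝ → ℝ → ℝ → ℝ}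

lemma hasDerivAt_pdr (hw : Differentiable ℝ (unc w)) (r z t : ℝ) :
    HasDerivAt (fun s => w s z t) (pdr w r z t) r :=
  ((hw _).comp r ((differentiableAt_id).prodMk (differentiableAt_const (z, t)))).hasDerivAt

lemma hasDerivAt_pdz (hw : Differentiable ℝ (unc w)) (r z t : ℝ) :
    HasDerivAt (fun s => w r s t) (pdz w r z t) z :=
  ((hw _).comp z ((differentiableAt_const r).prodMk
    ((differentiableAt_id).prodMk (differentiableAt_const t)))).hasDerivAt

lemma hasDerivAt_pdt (hw : Differentiable ℝ (unc w)) (r z t : ℝ) :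
    HasDerivAt (fun s => w r z s) (pdt w r z t) t :=
  ((hw _).comp t ((differentiableAt_const r).prodMk
    ((differentiableAt_const z).prodMk differentiableAt_id))).hasDerivAt

lemma contDiff_unc_pdr (hw : ContDiff ℝ ∞ (unc w)) : ContDiff ℝ ∞ (unc (pdr w)) := by
  have hline (r z t : ℝ) : HasDerivAt (fun s : ℝ => (s, z, t)) ((1 : ℝ), (0 : ℝ), (0 : ℝ)) r :=
    (hasDerivAt_id r).prodMk (hasDerivAt_const r (z, t))
  have hfd : unc (pdr w) = fun q => fderiv ℝ (unc w) q (1, 0, 0) := funext fun ⟨r, z, t⟩ =>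
    (((hw.differentiable (by simp)) _).hasFDerivAt.comp_hasDerivAt r (hline r z t)).deriv
  rw [hfd]
  exact (hw.fderiv_right (by simp)).clm_apply contDiff_const

lemma contDiff_unc_pdz (hw : ContDiff ℝ ∞ (unc w)) : ContDiff ℝ ∞ (unc (pdz w)) := by
  have hline (r z t : ℝ) : HasDerivAt (fun s : ℝ => (r, s, t)) ((0 : ℝ), (1 : ℝ), (0 : ℝ)) z :=
    (hasDerivAt_const z r).prodMk ((hasDerivAt_id z).prodMk (hasDerivAt_const z t))
  have hfd : unc (pdz w) = fun q => fderiv ℝ (unc w) q (0, 1, 0) := funext fun ⟨r, z, t⟩ =>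
    (((hw.differentiable (by simp)) _).hasFDerivAt.comp_hasDerivAt z (hline r z t)).deriv
  rw [hfd]
  exact (hw.fderiv_right (by simp)).clm_apply contDiff_const

lemma contDiff_unc_pdt (hw : ContDiff ℝ ∞ (unc w)) : ContDiff ℝ ∞ (unc (pdt w)) := by
  have hline (r z t : ℝ) : HasDerivAt (fun s : ℝ => (r, z, s)) ((0 : ℝ), (0 : ℝ), (1 : ℝ)) t :=
    (hasDerivAt_const t r).prodMk ((hasDerivAt_const t z).prodMk (hasDerivAt_id t))
  have hfd : unc (pdt w) = fun q => fderiv ℝ (unc w) q (0, 0, 1) := funext fun ⟨r, z, t⟩ =>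
    (((hw.differentiable (by simp)) _).hasFDerivAt.comp_hasDerivAt t (hline r z t)).deriv
  rw [hfd]
  exact (hw.fderiv_right (by simp)).clm_apply contDiff_const

lemma pdr_neg (w : ℝ → ℝ → ℝ → ℝ) : pdr (fun r z s => -w r z s) = fun r z s => -pdr w r z s := by
  funext r z s; exact deriv.neg

lemma pdz_neg (w : ℝ → ℝ → ℝ → ℝ) : pdz (fun r z s => -w r z s) = fun r z s => -pdz w r z s := by
  funext r z s; exact deriv.neg

lemma pdt_neg (w : ℝ → ℝ → ℝ → ℝ) : pdt (fun r z s => -w r z s) = fun r z s => -pdt w r z s := by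
  funext r z s; exact deriv.neg

end Partials

section OneVariable

variable {f : ℝ → ℝ} {lo hi b : ℝ}

lemma IsMaxOn.deriv_nonneg_of_Icc (hmax : IsMaxOn f (Icc lo hi) b) (hb : b ∈ Ioc lo hi)
    (hf : DifferentiableAt ℝ f b) : 0 ≤ deriv f b := by
  have hseg : segment ℝ b lo ⊆ Icc lo hi :=
    (convex_Icc lo hi).segment_subset ⟨hb.1.le, hb.2⟩ (left_mem_Icc.2 (hb.1.le.trans hb.2))
  have h := hmax.localize.hasFDerivWithinAt_nonpos hf.hasDerivAt.hasFDerivAt.hasFDerivWithinAt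
    (sub_mem_posTangentConeAt_of_segment_subset hseg)
  rw [ContinuousLinearMap.toSpanSingleton_apply, smul_eq_mul] at h
  nlinarith [hb.1]

lemma eventually_lt_of_deriv_pos_nhdsGT (hf : Differentiable ℝ f)
    (h : ∀ᶠ x in 𝓝[>] b, 0 < deriv f x) : ∀ᶠ x in 𝓝[>] b, f b < f x := by
  obtain ⟨c, hbc, hc⟩ := mem_nhdsGT_iff_exists_Ioo_subset.1 h
  filter_upwards [Ioo_mem_nhdsGT hbc] with x hx
  refine strictMonoOn_of_deriv_pos (convex_Icc b x) hf.continuous.continuousOn (fun y hy => ?_)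
    (left_mem_Icc.2 hx.1.le) (right_mem_Icc.2 hx.1.le) hx.1
  rw [interior_Icc] at hy
  exact hc ⟨hy.1, hy.2.trans hx.2⟩

lemma eventually_lt_of_deriv_neg_nhdsLT (hf : Differentiable ℝ f)
    (h : ∀ᶠ x in 𝓝[<] b, deriv f x < 0) : ∀ᶠ x in 𝓝[<] b, f b < f x := by
  obtain ⟨c, hcb, hc⟩ := mem_nhdsLT_iff_exists_Ioo_subset.1 h
  filter_upwards [Ioo_mem_nhdsLT hcb] with x hx
  refine strictAntiOn_of_deriv_neg (convex_Icc x b) hf.continuous.continuousOn (fun y hy => ?_)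
    (left_mem_Icc.2 hx.2.le) (right_mem_Icc.2 hx.2.le) hx.2
  rw [interior_Icc] at hy
  exact hc ⟨hx.1.trans hy.1, hy.2⟩

lemma IsMaxOn.deriv_deriv_nonpos_of_Icc (hmax : IsMaxOn f (Icc lo hi) b) (hb : b ∈ Icc lo hi)
    (hlohi : lo < hi) (hf : Differentiable ℝ f) (hd : deriv f b = 0) :
    deriv (deriv f) b ≤ 0 := by
  by_contra! hpos
  have hsign : ∀ᶠ x in 𝓝[≠] b, SignType.sign (deriv f x) = SignType.sign (x - b) :=
    nhdsWithin_le_nhds (eventually_nhdsWithin_sign_eq_of_deriv_pos hpos hd)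
  rcases hb.2.lt_or_eq with hbhi | rfl
  · have hle : ∀ᶠ x in 𝓝[>] b, f x ≤ f b := by
      filter_upwards [Ioo_mem_nhdsGT hbhi] with x hx using hmax ⟨hb.1.trans hx.1.le, hx.2.le⟩
    obtain ⟨x, hlt, hle⟩ := ((eventually_lt_of_deriv_pos_nhdsGT hf
      (deriv_pos_right_of_sign_deriv hsign)).and hle).exists
    linarith
  · have hle : ∀ᶠ x in 𝓝[<] b, f x ≤ f b := by
      filter_upwards [Ioo_mem_nhdsLT hlohi] with x hx using hmax ⟨hx.1.le, hx.2.le⟩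
    obtain ⟨x, hlt, hle⟩ := ((eventually_lt_of_deriv_neg_nhdsLT hf
      (deriv_neg_left_of_sign_deriv hsign)).and hle).exists
    linarith

end OneVariable

section MaxPrinciple

def parabolicOp (ν : ℝ) (br bz u : ℝ → ℝ → ℝ → ℝ) : ℝ → ℝ → ℝ → ℝ := fun r z s =>
  pdt u r z s + br r z s * pdr u r z s + bz r z s * pdz u r z s
    - ν * (pdr (pdr u) r z s + pdz (pdz u) r z s)

variable {ν r₀ r₁ z₀ z₁ t : ℝ} {br bz u : ℝ → ℝ → ℝ → ℝ}

lemma parabolicOp_neg (r z s : ℝ) :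
    parabolicOp ν br bz (fun r z s => -u r z s) r z s = -parabolicOp ν br bz u r z s := by
  simp only [parabolicOp, pdr_neg, pdz_neg, pdt_neg]
  ring

lemma le_parabolicOp_of_isMaxOn {φ : ℝ → ℝ} {φ' r₁' z₁' s₁ : ℝ}
    (hu : Differentiable ℝ (unc u)) (hν : 0 ≤ ν) (hz : z₀ < z₁) (hφ : HasDerivAt φ φ' s₁)
    (hmax : IsMaxOn (fun p : ℝ × ℝ × ℝ => u p.1 p.2.1 p.2.2 - φ p.2.2)
      (Icc r₀ r₁ ×ˢ Icc z₀ z₁ ×ˢ Icc 0 t) (r₁', z₁', s₁))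
    (hr : r₁' ∈ Ioo r₀ r₁) (hz' : z₁' ∈ Icc z₀ z₁) (hs : s₁ ∈ Ioc 0 t)
    (hneu : pdz u r₁' z₀ s₁ = 0 ∧ pdz u r₁' z₁ s₁ = 0) :
    φ' ≤ parabolicOp ν br bz u r₁' z₁' s₁ := by
  have hmax_t : IsMaxOn (fun s => u r₁' z₁' s - φ s) (Icc 0 t) s₁ := fun s hs => by
    simpa using hmax (show (r₁', z₁', s) ∈ _ from ⟨⟨hr.1.le, hr.2.le⟩, hz', hs⟩)
  have hmax_r : IsMaxOn (fun ρ => u ρ z₁' s₁) (Icc r₀ r₁) r₁' := fun ρ hρ => by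
    simpa using hmax (show (ρ, z₁', s₁) ∈ _ from ⟨hρ, hz', hs.1.le, hs.2⟩)
  have hmax_z : IsMaxOn (fun ζ => u r₁' ζ s₁) (Icc z₀ z₁) z₁' := fun ζ hζ => by
    simpa using hmax (show (r₁', ζ, s₁) ∈ _ from ⟨⟨hr.1.le, hr.2.le⟩, hζ, hs.1.le, hs.2⟩)
  have hdt : φ' ≤ pdt u r₁' z₁' s₁ := by
    have hd : HasDerivAt (fun s => u r₁' z₁' s - φ s) (pdt u r₁' z₁' s₁ - φ') s₁ :=
      (hasDerivAt_pdt hu r₁' z₁' s₁).sub hφ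
    have := hmax_t.deriv_nonneg_of_Icc hs hd.differentiableAt
    rwa [hd.deriv, sub_nonneg] at this
  have hdr : pdr u r₁' z₁' s₁ = 0 := (hmax_r.isLocalMax (Icc_mem_nhds hr.1 hr.2)).deriv_eq_zero
  have hdrr : pdr (pdr u) r₁' z₁' s₁ ≤ 0 :=
    hmax_r.deriv_deriv_nonpos_of_Icc ⟨hr.1.le, hr.2.le⟩ (hr.1.trans hr.2)
      (fun ρ => (hasDerivAt_pdr hu ρ z₁' s₁).differentiableAt) hdr
  have hdz : pdz u r₁' z₁' s₁ = 0 := by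
    rcases hz'.1.eq_or_lt with rfl | h₀
    · exact hneu.1
    rcases hz'.2.eq_or_lt with rfl | h₁
    · exact hneu.2
    exact (hmax_z.isLocalMax (Icc_mem_nhds h₀ h₁)).deriv_eq_zero
  have hdzz : pdz (pdz u) r₁' z₁' s₁ ≤ 0 :=
    hmax_z.deriv_deriv_nonpos_of_Icc hz' hz
      (fun ζ => (hasDerivAt_pdz hu r₁' ζ s₁).differentiableAt) hdz
  simp only [parabolicOp, hdr, hdz, mul_zero, add_zero]
  nlinarith

theorem le_of_parabolicOp_lt {φ φ' : ℝ → ℝ} {B : ℝ} (hu : Differentiable ℝ (unc u))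
    (hφ : ∀ s, HasDerivAt φ (φ' s) s) (hν : 0 ≤ ν) (hz : z₀ < z₁)
    (hinit : ∀ r ∈ Icc r₀ r₁, ∀ z ∈ Icc z₀ z₁, u r z 0 - φ 0 ≤ B)
    (hlat : ∀ z ∈ Icc z₀ z₁, ∀ s ∈ Ioc 0 t, u r₀ z s - φ s ≤ B ∧ u r₁ z s - φ s ≤ B)
    (hneu : ∀ r ∈ Ioo r₀ r₁, ∀ s ∈ Ioc 0 t, pdz u r z₀ s = 0 ∧ pdz u r z₁ s = 0)
    (hpde : ∀ r ∈ Ioo r₀ r₁, ∀ z ∈ Icc z₀ z₁, ∀ s ∈ Ioc 0 t,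
      parabolicOp ν br bz u r z s < φ' s) :
    ∀ r ∈ Icc r₀ r₁, ∀ z ∈ Icc z₀ z₁, ∀ s ∈ Icc 0 t, u r z s - φ s ≤ B := by
  intro r hr z hz' s hs
  have hw : Continuous fun p : ℝ × ℝ × ℝ => u p.1 p.2.1 p.2.2 - φ p.2.2 :=
    hu.continuous.sub ((continuous_iff_continuousAt.2 fun s => (hφ s).continuousAt).comp
      continuous_snd.snd)
  obtain ⟨⟨r₁', z₁', s₁⟩, ⟨hr', hz'', hs'⟩, hmax⟩ :=
    (isCompact_Icc.prod (isCompact_Icc.prod isCompact_Icc)).exists_isMaxOn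
      ⟨(r, z, s), hr, hz', hs⟩ hw.continuousOn
  suffices u r₁' z₁' s₁ - φ s₁ ≤ B from (hmax (show (r, z, s) ∈ _ from ⟨hr, hz', hs⟩)).trans this
  rcases hs'.1.eq_or_lt with rfl | hs₀
  · exact hinit r₁' hr' z₁' hz''
  rcases hr'.1.eq_or_lt with rfl | h₀
  · exact (hlat z₁' hz'' s₁ ⟨hs₀, hs'.2⟩).1
  rcases hr'.2.eq_or_lt with rfl | h₁
  · exact (hlat z₁' hz'' s₁ ⟨hs₀, hs'.2⟩).2
  exact absurd (le_parabolicOp_of_isMaxOn hu hν hz (hφ s₁) hmax ⟨h₀, h₁⟩ hz'' ⟨hs₀, hs'.2⟩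
    (hneu r₁' ⟨h₀, h₁⟩ s₁ ⟨hs₀, hs'.2⟩)) (hpde r₁' ⟨h₀, h₁⟩ z₁' hz'' s₁ ⟨hs₀, hs'.2⟩).not_ge

theorem le_of_parabolicOp_le {h : ℝ → ℝ} {B : ℝ} (hu : Differentiable ℝ (unc u))
    (hh : Continuous h) (hh0 : ∀ s, 0 ≤ h s) (hν : 0 ≤ ν) (hz : z₀ < z₁) (ht : 0 ≤ t)
    (hinit : ∀ r ∈ Icc r₀ r₁, ∀ z ∈ Icc z₀ z₁, u r z 0 ≤ B)
    (hlat : ∀ z ∈ Icc z₀ z₁, ∀ s ∈ Ioc 0 t, u r₀ z s ≤ B ∧ u r₁ z s ≤ B)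
    (hneu : ∀ r ∈ Ioo r₀ r₁, ∀ s ∈ Ioc 0 t, pdz u r z₀ s = 0 ∧ pdz u r z₁ s = 0)
    (hpde : ∀ r ∈ Ioo r₀ r₁, ∀ z ∈ Icc z₀ z₁, ∀ s ∈ Ioc 0 t,
      parabolicOp ν br bz u r z s ≤ h s) :
    ∀ r ∈ Icc r₀ r₁, ∀ z ∈ Icc z₀ z₁, u r z t ≤ B + ∫ s in (0 : ℝ)..t, h s := by
  intro r hr z hz'
  set M : ℝ → ℝ := fun s => ∫ x in (0 : ℝ)..s, h x
  have hM : ∀ s, HasDerivAt M (h s) s := fun s => (hh.integral_hasStrictDerivAt 0 s).hasDerivAt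
  have hM0 : ∀ s, 0 ≤ s → 0 ≤ M s := fun s hs =>
    intervalIntegral.integral_nonneg hs fun x _ => hh0 x
  -- Subtracting `ε s` as well makes the differential inequality strict.
  have hpen : ∀ ε > 0, u r z t - (M t + t * ε) ≤ B := fun ε hε =>
    le_of_parabolicOp_lt (φ := fun s => M s + s * ε) (φ' := fun s => h s + ε) hu
      (fun s => (hM s).add (hasDerivAt_mul_const ε)) hν hz
      (fun r hr z hz => by simpa [M] using hinit r hr z hz)
      (fun z hz s hs => have hpos := add_nonneg (hM0 s hs.1.le) (mul_nonneg hs.1.le hε.le)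
        ⟨by linarith [(hlat z hz s hs).1], by linarith [(hlat z hz s hs).2]⟩)
      hneu (fun r hr z hz s hs => (hpde r hr z hz s hs).trans_lt (lt_add_of_pos_right _ hε))
      r hr z hz' t ⟨ht, le_rfl⟩
  refine le_of_forall_pos_le_add fun δ hδ => ?_
  have hεt : t * (δ / (t + 1)) ≤ δ := by
    rw [mul_div_assoc', div_le_iff₀ (by linarith)]
    nlinarith
  linarith [hpen (δ / (t + 1)) (by positivity)]

theorem abs_le_of_abs_parabolicOp_le {h : ℝ → ℝ} {B : ℝ} (hu : Differentiable ℝ (unc u))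
    (hh : Continuous h) (hh0 : ∀ s, 0 ≤ h s) (hν : 0 ≤ ν) (hz : z₀ < z₁) (ht : 0 ≤ t)
    (hinit : ∀ r ∈ Icc r₀ r₁, ∀ z ∈ Icc z₀ z₁, |u r z 0| ≤ B)
    (hlat : ∀ z ∈ Icc z₀ z₁, ∀ s ∈ Ioc 0 t, |u r₀ z s| ≤ B ∧ |u r₁ z s| ≤ B)
    (hneu : ∀ r ∈ Ioo r₀ r₁, ∀ s ∈ Ioc 0 t, pdz u r z₀ s = 0 ∧ pdz u r z₁ s = 0)
    (hpde : ∀ r ∈ Ioo r₀ r₁, ∀ z ∈ Icc z₀ z₁, ∀ s ∈ Ioc 0 t,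
      |parabolicOp ν br bz u r z s| ≤ h s) :
    ∀ r ∈ Icc r₀ r₁, ∀ z ∈ Icc z₀ z₁, |u r z t| ≤ B + ∫ s in (0 : ℝ)..t, h s := by
  intro r hr z hz'
  rw [abs_le, neg_le]
  constructor
  · refine le_of_parabolicOp_le (u := fun r z s => -u r z s) (br := br) (bz := bz) hu.neg hh hh0
      hν hz ht (fun r hr z hz => neg_le.1 (abs_le.1 (hinit r hr z hz)).1)
      (fun z hz s hs => ⟨neg_le.1 (abs_le.1 (hlat z hz s hs).1).1,
        neg_le.1 (abs_le.1 (hlat z hz s hs).2).1⟩)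
      (fun r hr s hs => by simp [pdz_neg, hneu r hr s hs])
      (fun r hr z hz s hs => ?_) r hr z hz'
    rw [parabolicOp_neg]
    exact neg_le.1 (abs_le.1 (hpde r hr z hz s hs)).1
  · exact le_of_parabolicOp_le hu hh hh0 hν hz ht (fun r hr z hz => (abs_le.1 (hinit r hr z hz)).2)
      (fun z hz s hs => ⟨(abs_le.1 (hlat z hz s hs).1).2, (abs_le.1 (hlat z hz s hs).2).2⟩)
      hneu (fun r hr z hz s hs => (abs_le.1 (hpde r hr z hz s hs)).2) r hr z hz'

end MaxPrinciple

lemma enorm_le_eLpNorm_top_restrict {X : Type*} [TopologicalSpace X] [MeasurableSpace X]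
    [OpensMeasurableSpace X] {μ : Measure X} [μ.IsOpenPosMeasure] {U : Set X} (hU : IsOpen U)
    {g : X → ℝ} (hg : ContinuousOn g U) {x : X} (hx : x ∈ U) :
    ‖g x‖ₑ ≤ eLpNorm g ⊤ (μ.restrict U) := by
  by_contra! hlt
  rw [eLpNorm_exponent_top] at hlt
  set c := eLpNormEssSup g (μ.restrict U)
  have hV : IsOpen (U ∩ g ⁻¹' {y | c < ‖y‖ₑ}) :=
    hg.isOpen_inter_preimage hU (isOpen_lt continuous_const continuous_enorm)
  have hnull : μ (U ∩ g ⁻¹' {y | c < ‖y‖ₑ}) = 0 := by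
    have hae : ∀ᵐ y ∂μ.restrict U, ‖g y‖ₑ ≤ c := ae_le_eLpNormEssSup
    rw [inter_comm, ← Measure.restrict_apply' hU.measurableSet]
    exact measure_eq_zero_iff_ae_notMem.2 (hae.mono fun y hy => not_lt.2 hy)
  exact (hV.eq_empty_of_measure_zero hnull).subset ⟨hx, hlt⟩

section CylMeas

variable {R a : ℝ}

lemma isOpen_cylStrip : IsOpen (cylStrip R a) := isOpen_Ioo.prod isOpen_Ioo

lemma closure_cylStrip (hR : 0 < R) (ha : 0 < a) :
    closure (cylStrip R a) = Icc 0 R ×ˢ Icc (-a) a := by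
  rw [cylStrip, closure_prod_eq, closure_Ioo hR.ne, closure_Ioo (by linarith)]

lemma ae_cylMeas_mem : ∀ᵐ q ∂cylMeas R a, q ∈ cylStrip R a :=
  (withDensity_absolutelyContinuous _ _).ae_le (ae_restrict_mem isOpen_cylStrip.measurableSet)

lemma restrict_cylStrip_absolutelyContinuous :
    (volume : Measure (ℝ × ℝ)).restrict (cylStrip R a) ≪ cylMeas R a := by
  refine withDensity_absolutelyContinuous' (by fun_prop) ?_
  filter_upwards [ae_restrict_mem isOpen_cylStrip.measurableSet] with q hq
  exact (ENNReal.ofReal_pos.2 (by nlinarith [pi_pos, hq.1.1])).ne'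

lemma eLpNorm_top_cylMeas_le {g : ℝ × ℝ → ℝ} {C : ℝ} (hC : ∀ q ∈ cylStrip R a, |g q| ≤ C) :
    eLpNorm g ⊤ (cylMeas R a) ≤ ENNReal.ofReal C := by
  rw [eLpNorm_exponent_top]
  refine eLpNormEssSup_le_of_ae_bound ?_
  filter_upwards [ae_cylMeas_mem] with q hq
  simpa [Real.norm_eq_abs] using hC q hq

lemma abs_le_toReal_eLpNorm_top_cylMeas {g : ℝ × ℝ → ℝ} (hg : Continuous g)
    (hfin : eLpNorm g ⊤ (cylMeas R a) ≠ ⊤) {q : ℝ × ℝ} (hq : q ∈ closure (cylStrip R a)) :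
    |g q| ≤ (eLpNorm g ⊤ (cylMeas R a)).toReal := by
  refine closure_minimal (fun q hq => ?_) (isClosed_le (continuous_abs.comp hg) continuous_const) hq
  have h := (enorm_le_eLpNorm_top_restrict (μ := volume) isOpen_cylStrip hg.continuousOn hq).trans
    (by simpa only [eLpNorm_exponent_top] using
      eLpNormEssSup_mono_measure g restrict_cylStrip_absolutelyContinuous)
  rw [Real.enorm_eq_ofReal_abs] at h
  exact (ENNReal.ofReal_le_iff_le_toReal hfin).1 h

end CylMeas

section SupAbs

def supAbsOn (K : Set (ℝ × ℝ)) (F : ℝ → ℝ → ℝ → ℝ) (s : ℝ) : ℝ :=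
  sSup ((fun q : ℝ × ℝ => |F q.1 q.2 s|) '' K)

variable {K : Set (ℝ × ℝ)} {F : ℝ → ℝ → ℝ → ℝ}

lemma continuous_supAbsOn (hK : IsCompact K) (hF : Continuous (unc F)) :
    Continuous (supAbsOn K F) :=
  hK.continuous_sSup (f := fun s (q : ℝ × ℝ) => |F q.1 q.2 s|) (continuous_abs.comp
    (hF.comp (continuous_snd.fst.prodMk (continuous_snd.snd.prodMk continuous_fst))))

lemma abs_le_supAbsOn (hK : IsCompact K) (hF : Continuous (unc F)) {q : ℝ × ℝ} (hq : q ∈ K)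
    (s : ℝ) : |F q.1 q.2 s| ≤ supAbsOn K F s :=
  le_csSup (hK.bddAbove_image (continuous_abs.comp (hF.comp
    (continuous_fst.prodMk (continuous_snd.prodMk continuous_const)))).continuousOn)
    (mem_image_of_mem _ hq)

lemma supAbsOn_le (hne : K.Nonempty) {s c : ℝ} (h : ∀ q ∈ K, |F q.1 q.2 s| ≤ c) :
    supAbsOn K F s ≤ c :=
  csSup_le (hne.image _) (by rintro _ ⟨q, hq, rfl⟩; exact h q hq)

end SupAbs

section Swirl

def swirl (vφ : ℝ → ℝ → ℝ → ℝ) : ℝ → ℝ → ℝ → ℝ := fun r z s => r * vφ r z s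

/-- `w / r`, in a form that is continuous up to the axis when `w` vanishes there. -/
def divR (w : ℝ → ℝ → ℝ → ℝ) : ℝ → ℝ → ℝ → ℝ := fun r z s => ∫ τ in (0 : ℝ)..1, pdr w (τ * r) z s

/-- The left-hand side `u_t + v·∇u - ν (Δu - (2/r) u_r)` of the swirl equation, with the
singular term `(ν/r) u_r = ν (v_φ/r + v_{φ,r})` written so that it is continuous up to the axis. -/
def swirlSource (ν : ℝ) (vr vφ vz : ℝ → ℝ → ℝ → ℝ) : ℝ → ℝ → ℝ → ℝ := fun r z s =>
  parabolicOp ν vr vz (swirl vφ) r z s + ν * (divR vφ r z s + pdr vφ r z s)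

variable {ν : ℝ} {vr vφ vz : ℝ → ℝ → ℝ → ℝ}

lemma continuous_unc_divR (hvφ : Continuous (unc (pdr vφ))) : Continuous (unc (divR vφ)) :=
  intervalIntegral.continuous_parametric_intervalIntegral_of_continuous' (μ := volume)
    (f := fun (q : ℝ × ℝ × ℝ) (τ : ℝ) => pdr vφ (τ * q.1) q.2.1 q.2.2)
    (hvφ.comp ((continuous_snd.mul continuous_fst.fst).prodMk continuous_fst.snd)) 0 1

lemma mul_divR (hvφ : Differentiable ℝ (unc vφ)) (hvφ' : Continuous (unc (pdr vφ)))
    {r z s : ℝ} (h0 : vφ 0 z s = 0) : r * divR vφ r z s = vφ r z s := by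
  have hderiv : ∀ τ ∈ uIcc (0 : ℝ) 1,
      HasDerivAt (fun τ => vφ (τ * r) z s) (pdr vφ (τ * r) z s * r) τ := fun τ _ =>
    (hasDerivAt_pdr hvφ (τ * r) z s).comp (h := fun τ => τ * r) τ (hasDerivAt_mul_const r)
  have hcont : Continuous fun τ => pdr vφ (τ * r) z s * r :=
    (hvφ'.comp (f := fun τ : ℝ => (τ * r, z, s)) (by fun_prop)).mul continuous_const
  have h := intervalIntegral.integral_eq_sub_of_hasDerivAt hderiv (hcont.intervalIntegrable 0 1)
  rw [intervalIntegral.integral_mul_const] at h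
  simp only [one_mul, zero_mul, h0, sub_zero] at h
  rw [divR, mul_comm, h]

lemma pdr_swirl (hvφ : Differentiable ℝ (unc vφ)) (r z s : ℝ) :
    pdr (swirl vφ) r z s = vφ r z s + r * pdr vφ r z s := by
  have h := (hasDerivAt_id r).mul (hasDerivAt_pdr hvφ r z s)
  rw [id, one_mul] at h
  exact h.deriv

lemma pdz_swirl (hvφ : Differentiable ℝ (unc vφ)) (r z s : ℝ) :
    pdz (swirl vφ) r z s = r * pdz vφ r z s :=
  ((hasDerivAt_pdz hvφ r z s).const_mul r).deriv

lemma pdt_swirl (hvφ : Differentiable ℝ (unc vφ)) (r z s : ℝ) :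
    pdt (swirl vφ) r z s = r * pdt vφ r z s :=
  ((hasDerivAt_pdt hvφ r z s).const_mul r).deriv

lemma pdr_pdr_swirl (hvφ : ContDiff ℝ ∞ (unc vφ)) (r z s : ℝ) :
    pdr (pdr (swirl vφ)) r z s = 2 * pdr vφ r z s + r * pdr (pdr vφ) r z s := by
  have hd := hvφ.differentiable (by simp)
  have h : HasDerivAt (fun ρ => vφ ρ z s + ρ * pdr vφ ρ z s)
      (pdr vφ r z s + (1 * pdr vφ r z s + r * pdr (pdr vφ) r z s)) r :=
    (hasDerivAt_pdr hd r z s).add ((hasDerivAt_id r).mul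
      (hasDerivAt_pdr ((contDiff_unc_pdr hvφ).differentiable (by simp)) r z s))
  rw [show pdr (swirl vφ) = fun r z s => vφ r z s + r * pdr vφ r z s from
    funext fun r => funext fun z => funext fun s => pdr_swirl hd r z s]
  rw [pdr, h.deriv]
  ring

lemma pdz_pdz_swirl (hvφ : ContDiff ℝ ∞ (unc vφ)) (r z s : ℝ) :
    pdz (pdz (swirl vφ)) r z s = r * pdz (pdz vφ) r z s := by
  rw [show pdz (swirl vφ) = fun r z s => r * pdz vφ r z s from
    funext fun r => funext fun z => funext fun s => pdz_swirl (hvφ.differentiable (by simp)) r z s]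
  exact ((hasDerivAt_pdz ((contDiff_unc_pdz hvφ).differentiable (by simp)) r z s).const_mul r).deriv

lemma continuous_unc_swirlSource (hvr : Continuous (unc vr)) (hvz : Continuous (unc vz))
    (hvφ : ContDiff ℝ ∞ (unc vφ)) : Continuous (unc (swirlSource ν vr vφ vz)) := by
  have hu : ContDiff ℝ ∞ (unc (swirl vφ)) := contDiff_fst.mul hvφ
  have hc {w : ℝ → ℝ → ℝ → ℝ} (hw : ContDiff ℝ ∞ (unc w)) : Continuous (unc w) := hw.continuous
  have hpdr := contDiff_unc_pdr hvφ
  exact (((((hc (contDiff_unc_pdt hu)).add (hvr.mul (hc (contDiff_unc_pdr hu)))).add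
    (hvz.mul (hc (contDiff_unc_pdz hu)))).sub (continuous_const.mul
    ((hc (contDiff_unc_pdr (contDiff_unc_pdr hu))).add
      (hc (contDiff_unc_pdz (contDiff_unc_pdz hu))))))).add
    (continuous_const.mul ((continuous_unc_divR (hc hpdr)).add (hc hpdr)))

lemma parabolicOp_swirl (hvφ : ContDiff ℝ ∞ (unc vφ)) (h0 : ∀ z s, vφ 0 z s = 0)
    {r z s : ℝ} (hr : r ≠ 0) :
    parabolicOp ν (fun r z s => vr r z s + ν / r) vz (swirl vφ) r z s
      = swirlSource ν vr vφ vz r z s := by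
  have hd := hvφ.differentiable (by simp)
  have hdiv : divR vφ r z s = vφ r z s / r := by
    rw [eq_div_iff hr, mul_comm, mul_divR hd (contDiff_unc_pdr hvφ).continuous (h0 z s)]
  simp only [swirlSource, parabolicOp, pdr_swirl hd, hdiv]
  field_simp
  ring

end Swirl

section NavierStokesHeat

variable {ν κ R a T : ℝ} {α : ℝ → ℝ} {vr vφ vz pp θ fr fφ fz g : ℝ → ℝ → ℝ → ℝ}

lemma NSHeat.contDiff_vφ (hsol : NSHeat ν κ R a T α vr vφ vz pp θ fr fφ fz g) :
    ContDiff ℝ ∞ (unc vφ) :=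
  contDiff_infty.2 hsol.smooth_vφ

lemma NSHeat.continuous_swirlSource (hsol : NSHeat ν κ R a T α vr vφ vz pp θ fr fφ fz g) :
    Continuous (unc (swirlSource ν vr vφ vz)) :=
  continuous_unc_swirlSource (hsol.smooth_vr 0).continuous (hsol.smooth_vz 0).continuous
    hsol.contDiff_vφ

/-- The swirl equation: `r` times the `φ`-momentum equation. -/
lemma NSHeat.swirlSource_eq (hsol : NSHeat ν κ R a T α vr vφ vz pp θ fr fφ fz g) {r z s : ℝ}
    (hrz : (r, z) ∈ cylStrip R a) (hs : s ∈ Ioo 0 T) :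
    swirlSource ν vr vφ vz r z s = α (θ r z s) * (r * fφ r z s) := by
  obtain ⟨⟨hr, hrR⟩, hza, hza'⟩ := hrz
  have hvφ := hsol.contDiff_vφ
  have hd := hvφ.differentiable (by simp)
  have hdiv : divR vφ r z s = vφ r z s / r := by
    rw [eq_div_iff hr.ne', mul_comm,
      mul_divR hd (contDiff_unc_pdr hvφ).continuous (hsol.axis_vφ z s)]
  rw [show α (θ r z s) * (r * fφ r z s) = r * (α (θ r z s) * fφ r z s) by ring,
    ← hsol.mom_φ r z s hr hrR hza hza' hs.1 hs.2]
  simp only [swirlSource, parabolicOp, pdt_swirl hd, pdr_swirl hd, pdz_swirl hd,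
    pdr_pdr_swirl hvφ, pdz_pdz_swirl hvφ, hdiv]
  field_simp
  ring

theorem NSHeat.abs_swirl_le (hsol : NSHeat ν κ R a T α vr vφ vz pp θ fr fφ fz g) (hν : 0 < ν)
    (hR : 0 < R) (ha : 0 < a) {t B : ℝ} (ht : t ∈ Ioo 0 T) (hB : 0 ≤ B)
    (hinit : ∀ q ∈ Icc 0 R ×ˢ Icc (-a) a, |swirl vφ q.1 q.2 0| ≤ B) :
    ∀ q ∈ Icc 0 R ×ˢ Icc (-a) a, |swirl vφ q.1 q.2 t|
      ≤ B + ∫ s in (0 : ℝ)..t, supAbsOn (Icc 0 R ×ˢ Icc (-a) a) (swirlSource ν vr vφ vz) s := by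
  have hvφ := hsol.contDiff_vφ
  have hK : IsCompact (Icc 0 R ×ˢ Icc (-a) a) := isCompact_Icc.prod isCompact_Icc
  have hK₀ : ((0 : ℝ), (0 : ℝ)) ∈ Icc 0 R ×ˢ Icc (-a) a :=
    ⟨⟨le_rfl, hR.le⟩, ⟨by linarith, ha.le⟩⟩
  have hF := hsol.continuous_swirlSource
  rintro ⟨r, z⟩ ⟨hr, hz⟩
  refine abs_le_of_abs_parabolicOp_le (u := swirl vφ) (br := fun r z s => vr r z s + ν / r) (bz := vz)
    ((contDiff_fst.mul hvφ).differentiable (by simp)) (continuous_supAbsOn hK hF)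
    (fun s => (abs_nonneg _).trans (abs_le_supAbsOn hK hF hK₀ s)) hν.le (by linarith) ht.1.le
    (fun r hr z hz => hinit (r, z) ⟨hr, hz⟩) (fun z hz s hs => ?_) (fun r hr s hs => ?_)
    (fun r hr z hz s hs => ?_) r hr z hz
  · have hlat := (hsol.bc_lat z s hz.1 hz.2 hs.1 (hs.2.trans_lt ht.2)).2.1
    simp [swirl, hlat, hB]
  · have htop := hsol.bc_top r s hr.1.le hr.2.le hs.1 (hs.2.trans_lt ht.2)
    simp [pdz_swirl (hvφ.differentiable (by simp)), htop.1.2.2, htop.2.2.2]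
  · rw [parabolicOp_swirl hvφ hsol.axis_vφ hr.1.ne']
    exact abs_le_supAbsOn hK hF (q := (r, z)) ⟨⟨hr.1.le, hr.2.le⟩, hz⟩ s

lemma NSHeat.supAbsOn_swirlSource_le (hsol : NSHeat ν κ R a T α vr vφ vz pp θ fr fφ fz g)
    (hR : 0 < R) (ha : 0 < a) {θs θS Mα : ℝ}
    (hθ : ∀ r z t, (r, z) ∈ cylStrip R a → t ∈ Ioo 0 T → θ r z t ∈ Icc θs θS)
    (hα : ∀ ϑ ∈ Icc θs θS, |α ϑ| ≤ Mα) (hMα : 0 ≤ Mα) {s : ℝ} (hs : s ∈ Ioo 0 T)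
    (hfin : nLp R a ⊤ (swirl fφ) s ≠ ⊤) :
    supAbsOn (Icc 0 R ×ˢ Icc (-a) a) (swirlSource ν vr vφ vz) s
      ≤ Mα * (nLp R a ⊤ (swirl fφ) s).toReal := by
  have hF : Continuous fun q : ℝ × ℝ => swirlSource ν vr vφ vz q.1 q.2 s :=
    hsol.continuous_swirlSource.comp (continuous_fst.prodMk (continuous_snd.prodMk continuous_const))
  have hle : eLpNorm (fun q : ℝ × ℝ => swirlSource ν vr vφ vz q.1 q.2 s) ⊤ (cylMeas R a)
      ≤ ENNReal.ofReal Mα * nLp R a ⊤ (swirl fφ) s := by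
    rw [nLp, ← enorm_eq_ofReal hMα, ← eLpNorm_const_smul]
    refine eLpNorm_mono_ae ?_
    filter_upwards [ae_cylMeas_mem] with q hq
    rw [hsol.swirlSource_eq hq hs, Pi.smul_apply, smul_eq_mul, norm_mul, norm_mul Mα,
      Real.norm_of_nonneg hMα, Real.norm_eq_abs]
    exact mul_le_mul_of_nonneg_right (hα _ (hθ q.1 q.2 s hq hs)) (norm_nonneg _)
  have hfin' : ENNReal.ofReal Mα * nLp R a ⊤ (swirl fφ) s ≠ ⊤ :=
    ENNReal.mul_ne_top ENNReal.ofReal_ne_top hfin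
  have hne : (Icc 0 R ×ˢ Icc (-a) a).Nonempty := ⟨(0, 0), ⟨le_rfl, hR.le⟩, by linarith, ha.le⟩
  refine supAbsOn_le hne fun q hq => ?_
  calc |swirlSource ν vr vφ vz q.1 q.2 s|
      ≤ (eLpNorm (fun q : ℝ × ℝ => swirlSource ν vr vφ vz q.1 q.2 s) ⊤ (cylMeas R a)).toReal :=
        abs_le_toReal_eLpNorm_top_cylMeas hF (ne_top_of_le_ne_top hfin' hle)
          ((closure_cylStrip hR ha).symm ▸ hq)
    _ ≤ (ENNReal.ofReal Mα * nLp R a ⊤ (swirl fφ) s).toReal := ENNReal.toReal_mono hfin' hle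
    _ = Mα * (nLp R a ⊤ (swirl fφ) s).toReal := by
        rw [ENNReal.toReal_mul, ENNReal.toReal_ofReal hMα]

end NavierStokesHeat

theorem stmt_4_general
    (ν κ R a T θs θS Mα : ℝ) (α : ℝ → ℝ)
    (vr vφ vz pp θ fr fφ fz g : ℝ → ℝ → ℝ → ℝ)
    (hν : 0 < ν) (hR : 0 < R) (ha : 0 < a)
    (hsol : NSHeat ν κ R a T α vr vφ vz pp θ fr fφ fz g)
    (hθ : ∀ r z t, (r, z) ∈ cylStrip R a → t ∈ Ioo 0 T → θ r z t ∈ Icc θs θS)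
    (hα : ∀ ϑ ∈ Icc θs θS, |α ϑ| ≤ Mα)
    -- `f₀ = r f_φ ∈ L₁(0,T;L_∞(Ω))`:
    (hf0 : IntegrableOn
        (fun t' => (nLp R a ⊤ (fun r z s => r * fφ r z s) t').toReal) (Ioo 0 T))
    (hf0fin : ∀ t' ∈ Ioo 0 T, nLp R a ⊤ (fun r z s => r * fφ r z s) t' ≠ ⊤)
    -- `u(0) ∈ L_∞(Ω)`:
    (hu0 : nLp R a ⊤ (fun r z s => r * vφ r z s) 0 ≠ ⊤) :
    ∀ t ∈ Ioo 0 T,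
      nLp R a ⊤ (fun r z s => r * vφ r z s) t
        ≤ ENNReal.ofReal
            (Mα * (∫ t' in Ioo 0 t, (nLp R a ⊤ (fun r z s => r * fφ r z s) t').toReal)
              + (nLp R a ⊤ (fun r z s => r * vφ r z s) 0).toReal) := by
  intro t ht
  have hK := closure_cylStrip hR ha
  have hMα : 0 ≤ Mα := (abs_nonneg _).trans
    (hα _ (hθ (R / 2) 0 t ⟨⟨by linarith, by linarith⟩, by linarith, ha⟩ ht))
  have hbound := hsol.abs_swirl_le hν hR ha ht ENNReal.toReal_nonneg fun q hq =>
    abs_le_toReal_eLpNorm_top_cylMeas (g := sp (swirl vφ) 0)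
      ((contDiff_fst.mul hsol.contDiff_vφ).continuous.comp
        (continuous_fst.prodMk (continuous_snd.prodMk continuous_const))) hu0 (hK ▸ hq)
  have hsource : ∫ s in (0 : ℝ)..t, supAbsOn (Icc 0 R ×ˢ Icc (-a) a) (swirlSource ν vr vφ vz) s
      ≤ Mα * ∫ s in Ioo 0 t, (nLp R a ⊤ (swirl fφ) s).toReal := by
    rw [intervalIntegral.integral_of_le ht.1.le, integral_Ioc_eq_integral_Ioo,
      ← integral_const_mul]
    exact setIntegral_mono_on
      ((continuous_supAbsOn (isCompact_Icc.prod isCompact_Icc)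
        hsol.continuous_swirlSource).integrableOn_Icc.mono_set Ioo_subset_Icc_self)
      ((hf0.mono_set (Ioo_subset_Ioo_right ht.2.le)).const_mul Mα) measurableSet_Ioo
      fun s hs => hsol.supAbsOn_swirlSource_le hR ha hθ hα hMα ⟨hs.1, hs.2.trans ht.2⟩
        (hf0fin s ⟨hs.1, hs.2.trans ht.2⟩)
  calc nLp R a ⊤ (swirl vφ) t
      ≤ ENNReal.ofReal ((nLp R a ⊤ (swirl vφ) 0).toReal + ∫ s in (0 : ℝ)..t,
          supAbsOn (Icc 0 R ×ˢ Icc (-a) a) (swirlSource ν vr vφ vz) s) :=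
        eLpNorm_top_cylMeas_le fun q hq => hbound q (hK ▸ subset_closure hq)
    _ ≤ _ := ENNReal.ofReal_le_ofReal ((add_comm _ _).le.trans (add_le_add_left hsource _))

/-- maximum principle for the swirl, Lemma 2.5: under the hypotheses of the
system, with `θ_* ≤ θ ≤ θ*`, `|α| ≤ M_α` on `[θ_*,θ*]`, `f₀ = r f_φ ∈ L₁(0,T;L_∞(Ω))` and
`u(0) = r v_φ(·,0) ∈ L_∞(Ω)`, the swirl `u = r v_φ` satisfies
`|u(t)|_{∞,Ω} ≤ M_α |f₀|_{∞,1,Ω^t} + |u(0)|_{∞,Ω}` for every `t ∈ (0,T)`. -/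
theorem stmt_4
    (ν κ R a T θs θS Mα : ℝ) (α : ℝ → ℝ)
    (vr vφ vz pp θ fr fφ fz g : ℝ → ℝ → ℝ → ℝ)
    (hν : 0 < ν) (hκ : 0 < κ) (hR : 0 < R) (ha : 0 < a) (hT : 0 < T)
    (hsol : NSHeat ν κ R a T α vr vφ vz pp θ fr fφ fz g)
    (hθs : 0 < θs)
    (hθ : ∀ r z t, (r, z) ∈ cylStrip R a → t ∈ Ioo 0 T → θ r z t ∈ Icc θs θS)
    (hα : ∀ ϑ ∈ Icc θs θS, |α ϑ| ≤ Mα)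
    -- `f₀ = r f_φ ∈ L₁(0,T;L_∞(Ω))`:
    (hf0 : IntegrableOn
        (fun t' => (nLp R a ⊤ (fun r z s => r * fφ r z s) t').toReal) (Ioo 0 T))
    (hf0fin : ∀ t' ∈ Ioo 0 T, nLp R a ⊤ (fun r z s => r * fφ r z s) t' ≠ ⊤)
    -- `u(0) ∈ L_∞(Ω)`:
    (hu0 : nLp R a ⊤ (fun r z s => r * vφ r z s) 0 ≠ ⊤) :
    ∀ t ∈ Ioo 0 T,
      nLp R a ⊤ (fun r z s => r * vφ r z s) t
        ≤ ENNReal.ofReal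
            (Mα * (∫ t' in Ioo 0 t, (nLp R a ⊤ (fun r z s => r * fφ r z s) t').toReal)
              + (nLp R a ⊤ (fun r z s => r * vφ r z s) 0).toReal) :=
  stmt_4_general ν κ R a T θs θS Mα α vr vφ vz pp θ fr fφ fz g hν hR ha hsol hθ hα hf0 hf0fin hu0
end
end

section
/- Let ψ₁ be the modified stream function, i.e. an axially symmetric smooth solution of −ψ_{1,rr} − (3/r)ψ_{1,r} − ψ_{1,zz} = Γ in Ω with ψ₁ = 0 on S, where Γ is axially symmetric, smooth, and vanishes on S, and ψ₁ admits the expansion ψ₁ = d₁(z) + d₂(z)r² + … near the axis. Then there is a constant c > 0 such that ∫_Ω (ψ_{1,rr}² + ψ_{1,rz}² + ψ_{1,zz}² + ψ_{1,r}²/r²) dx + ∫_{−a}^{a} (ψ_{1,z}²|_{r=0} + ψ_{1,r}²|_{r=R}) dz ≤ c |Γ|²_{2,Ω}. -/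
open MeasureTheory Real Set
open scoped ENNReal

noncomputable section

/-- `∂_r` of a function of `(r,z)`. -/
def qdr (w : ℝ → ℝ → ℝ) : ℝ → ℝ → ℝ := fun r z => deriv (fun s => w s z) r
/-- `∂_z` of a function of `(r,z)`. -/
def qdz (w : ℝ → ℝ → ℝ) : ℝ → ℝ → ℝ := fun r z => deriv (fun s => w r s) z

/-- Hypotheses on the modified stream function `ψ₁` and the datum `Γ`:
smoothness, axial symmetry (built in: functions of `(r,z)`), the equation
`−ψ₁,rr − (3/r)ψ₁,r − ψ₁,zz = Γ` in `Ω`, `ψ₁ = 0` and `Γ = 0` on `S`, and the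
behaviour `ψ₁,r, ψ₁,rz, ψ₁,rzz = O(r)` near the axis coming from the expansion
`ψ₁ = d₁(z) + d₂(z) r² + …`. -/
structure ModStream (R a : ℝ) (ψ Γ : ℝ → ℝ → ℝ) : Prop where
  smooth_ψ : ∀ n : ℕ, ContDiff ℝ n (fun q : ℝ × ℝ => ψ q.1 q.2)
  smooth_Γ : ∀ n : ℕ, ContDiff ℝ n (fun q : ℝ × ℝ => Γ q.1 q.2)
  eqn : ∀ r z, (r, z) ∈ cylStrip R a →
    - qdr (qdr ψ) r z - (3 / r) * qdr ψ r z - qdz (qdz ψ) r z = Γ r z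
  ψ_lat : ∀ z ∈ Icc (-a) a, ψ R z = 0
  ψ_top : ∀ r ∈ Icc (0:ℝ) R, ψ r a = 0 ∧ ψ r (-a) = 0
  Γ_lat : ∀ z ∈ Icc (-a) a, Γ R z = 0
  Γ_top : ∀ r ∈ Icc (0:ℝ) R, Γ r a = 0 ∧ Γ r (-a) = 0
  axis : ∃ C : ℝ, ∀ r ∈ Ioo (0:ℝ) R, ∀ z ∈ Icc (-a) a,
    |qdr ψ r z| ≤ C * r ∧ |qdr (qdz ψ) r z| ≤ C * r ∧ |qdr (qdz (qdz ψ)) r z| ≤ C * r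

/-!
Multiply the square of the equation by the weight `r`. The cross terms of
`r (ψ,rr + 3ψ,r/r + ψ,zz)²` equal `∂_r P + ∂_z Q + 2r ψ,rz²` for explicit fluxes `P`, `Q`
(`radialFlux`, `axialFlux`), so
`∫ rΓ² = ∫ r (ψ,rr² + 2ψ,rz² + ψ,zz² + 9ψ,r²/r²) + boundary terms`.
On `z = ±a` the flux `Q` vanishes since `ψ,r = 0` there; on `r = R` we have `ψ,z = ψ,zz = 0`
and on the axis `ψ,r = 0`, so `P` contributes exactly `3ψ,r²|_{r=R} + 2ψ,z²|_{r=0}`. Every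
term is nonnegative, so the estimate holds with `c = 1`.
-/

open Function
open scoped ContDiff

section PartialDerivatives

variable {w : ℝ → ℝ → ℝ}

theorem hasDerivAt_qdr {r z : ℝ} (hw : DifferentiableAt ℝ (uncurry w) (r, z)) :
    HasDerivAt (fun s => w s z) (qdr w r z) r := by
  exact (hw.comp r (differentiableAt_id.prodMk (differentiableAt_const z))).hasDerivAt

theorem hasDerivAt_qdz {r z : ℝ} (hw : DifferentiableAt ℝ (uncurry w) (r, z)) :
    HasDerivAt (fun t => w r t) (qdz w r z) z := by
  exact (hw.comp z ((differentiableAt_const r).prodMk differentiableAt_id)).hasDerivAt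

theorem qdr_eq_fderiv {r z : ℝ} (hw : DifferentiableAt ℝ (uncurry w) (r, z)) :
    qdr w r z = fderiv ℝ (uncurry w) (r, z) (1, 0) := by
  exact (hw.hasFDerivAt.comp_hasDerivAt r
    ((hasDerivAt_id r).prodMk (hasDerivAt_const r z))).deriv

theorem qdz_eq_fderiv {r z : ℝ} (hw : DifferentiableAt ℝ (uncurry w) (r, z)) :
    qdz w r z = fderiv ℝ (uncurry w) (r, z) (0, 1) := by
  exact (hw.hasFDerivAt.comp_hasDerivAt z
    ((hasDerivAt_const z r).prodMk (hasDerivAt_id z))).deriv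

theorem uncurry_qdr_eq (hw : Differentiable ℝ (uncurry w)) :
    uncurry (qdr w) = fun q => fderiv ℝ (uncurry w) q (1, 0) :=
  funext fun q => qdr_eq_fderiv (hw q)

theorem uncurry_qdz_eq (hw : Differentiable ℝ (uncurry w)) :
    uncurry (qdz w) = fun q => fderiv ℝ (uncurry w) q (0, 1) :=
  funext fun q => qdz_eq_fderiv (hw q)

theorem continuous_uncurry_qdr (hw : ContDiff ℝ 1 (uncurry w)) :
    Continuous (uncurry (qdr w)) := by
  rw [uncurry_qdr_eq (hw.differentiable one_ne_zero)]
  exact (hw.continuous_fderiv one_ne_zero).clm_apply continuous_const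

theorem continuous_uncurry_qdz (hw : ContDiff ℝ 1 (uncurry w)) :
    Continuous (uncurry (qdz w)) := by
  rw [uncurry_qdz_eq (hw.differentiable one_ne_zero)]
  exact (hw.continuous_fderiv one_ne_zero).clm_apply continuous_const

theorem ContDiff.uncurry_qdr (hw : ContDiff ℝ ∞ (uncurry w)) :
    ContDiff ℝ ∞ (uncurry (qdr w)) := by
  rw [uncurry_qdr_eq (hw.differentiable (by simp))]
  exact (hw.fderiv_right (by simp)).clm_apply contDiff_const

theorem ContDiff.uncurry_qdz (hw : ContDiff ℝ ∞ (uncurry w)) :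
    ContDiff ℝ ∞ (uncurry (qdz w)) := by
  rw [uncurry_qdz_eq (hw.differentiable (by simp))]
  exact (hw.fderiv_right (by simp)).clm_apply contDiff_const

theorem fderiv_fderiv_apply_const (hw : ContDiff ℝ ∞ (uncurry w)) (p v u : ℝ × ℝ) :
    fderiv ℝ (fun q => fderiv ℝ (uncurry w) q v) p u
      = fderiv ℝ (fderiv ℝ (uncurry w)) p u v := by
  have hd : Differentiable ℝ (fderiv ℝ (uncurry w)) :=
    (hw.fderiv_right (m := ∞) (by simp)).differentiable (by simp)
  rw [fderiv_clm_apply (hd p) (differentiableAt_const v)]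
  simp

theorem qdr_qdz_comm (hw : ContDiff ℝ ∞ (uncurry w)) (r z : ℝ) :
    qdr (qdz w) r z = qdz (qdr w) r z := by
  rw [qdr_eq_fderiv (hw.uncurry_qdz.differentiable (by simp) _),
    qdz_eq_fderiv (hw.uncurry_qdr.differentiable (by simp) _),
    uncurry_qdz_eq (hw.differentiable (by simp)), uncurry_qdr_eq (hw.differentiable (by simp)),
    fderiv_fderiv_apply_const hw, fderiv_fderiv_apply_const hw,
    (hw.contDiffAt.isSymmSndFDerivAt (by simp; decide)).eq]

end PartialDerivatives

section Rectangle

variable {a b c d : ℝ}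

theorem Continuous.integrableOn_Ioo_prod_Ioo {F : ℝ × ℝ → ℝ} (hF : Continuous F) :
    IntegrableOn F (Ioo a b ×ˢ Ioo c d) :=
  (hF.continuousOn.integrableOn_compact (isCompact_Icc.prod isCompact_Icc)).mono_set
    (prod_mono Ioo_subset_Icc_self Ioo_subset_Icc_self)

theorem volume_restrict_Ioo_prod_Ioo :
    (volume : Measure (ℝ × ℝ)).restrict (Ioo a b ×ˢ Ioo c d)
      = (volume.restrict (Ioo a b)).prod (volume.restrict (Ioo c d)) := by
  rw [Measure.prod_restrict]; rfl

theorem setIntegral_Ioo_prod_Ioo_qdr {P : ℝ → ℝ → ℝ} (hP : ContDiff ℝ 1 (uncurry P))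
    (hab : a ≤ b) :
    ∫ q in Ioo a b ×ˢ Ioo c d, qdr P q.1 q.2 = ∫ z in Ioo c d, (P b z - P a z) := by
  have hcont := continuous_uncurry_qdr hP
  have hint := hcont.integrableOn_Ioo_prod_Ioo (a := a) (b := b) (c := c) (d := d)
  rw [IntegrableOn, volume_restrict_Ioo_prod_Ioo] at hint
  rw [volume_restrict_Ioo_prod_Ioo]
  refine (integral_prod_symm _ hint).trans (integral_congr_ae (.of_forall fun z => ?_))
  show ∫ r in Ioo a b, qdr P r z = P b z - P a z
  rw [← integral_Ioc_eq_integral_Ioo, ← intervalIntegral.integral_of_le hab]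
  exact intervalIntegral.integral_eq_sub_of_hasDerivAt
    (fun r _ => hasDerivAt_qdr (hP.differentiable one_ne_zero _))
    ((hcont.comp (continuous_id.prodMk continuous_const)).intervalIntegrable _ _)

theorem setIntegral_Ioo_prod_Ioo_qdz {Q : ℝ → ℝ → ℝ} (hQ : ContDiff ℝ 1 (uncurry Q))
    (hcd : c ≤ d) :
    ∫ q in Ioo a b ×ˢ Ioo c d, qdz Q q.1 q.2 = ∫ r in Ioo a b, (Q r d - Q r c) := by
  have hcont := continuous_uncurry_qdz hQ
  have hint := hcont.integrableOn_Ioo_prod_Ioo (a := a) (b := b) (c := c) (d := d)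
  rw [IntegrableOn, volume_restrict_Ioo_prod_Ioo] at hint
  rw [volume_restrict_Ioo_prod_Ioo]
  refine (integral_prod _ hint).trans (integral_congr_ae (.of_forall fun r => ?_))
  show ∫ z in Ioo c d, qdz Q r z = Q r d - Q r c
  rw [← integral_Ioc_eq_integral_Ioo, ← intervalIntegral.integral_of_le hcd]
  exact intervalIntegral.integral_eq_sub_of_hasDerivAt
    (fun z _ => hasDerivAt_qdz (hQ.differentiable one_ne_zero _))
    ((hcont.comp (continuous_const.prodMk continuous_id)).intervalIntegrable _ _)

end Rectangle

theorem deriv_eq_zero_of_eqOn_zero {f : ℝ → ℝ} {U : Set ℝ} (hf : EqOn f 0 U) (hU : IsOpen U)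
    {x : ℝ} (hx : x ∈ U) : deriv f x = 0 := by
  rw [(Filter.eventuallyEq_of_mem (hU.mem_nhds hx) hf).deriv_eq]
  simp

theorem eq_zero_of_abs_le_mul_of_continuous {g : ℝ → ℝ} (hg : Continuous g) {C R : ℝ}
    (hR : 0 < R) (hb : ∀ r ∈ Ioo 0 R, |g r| ≤ C * r) : g 0 = 0 := by
  have hclosed : IsClosed {r | |g r| ≤ C * r} :=
    isClosed_le (continuous_abs.comp hg) (continuous_const.mul continuous_id)
  have h0 : (0 : ℝ) ∈ closure (Ioo 0 R) := by
    rw [closure_Ioo hR.ne]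
    exact ⟨le_rfl, hR.le⟩
  simpa using hclosed.closure_subset_iff.2 hb h0

theorem measurableSet_cylStrip {R a : ℝ} : MeasurableSet (cylStrip R a) :=
  measurableSet_Ioo.prod measurableSet_Ioo

theorem integral_cylMeas (R a : ℝ) (G : ℝ × ℝ → ℝ) :
    ∫ q, G q ∂(cylMeas R a) = 2 * π * ∫ q in cylStrip R a, q.1 * G q := by
  have hmeas : Measurable fun q : ℝ × ℝ => ENNReal.ofReal (2 * π * q.1) := by fun_prop
  rw [cylMeas, integral_withDensity_eq_integral_toReal_smul hmeas
    (.of_forall fun _ => ENNReal.ofReal_lt_top), ← integral_const_mul]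
  refine setIntegral_congr_fun measurableSet_cylStrip fun q hq => ?_
  have hq1 : 0 < q.1 := hq.1.1
  rw [ENNReal.toReal_ofReal (by positivity), smul_eq_mul]
  ring

section ModifiedStream

def radialFlux (ψ : ℝ → ℝ → ℝ) (r z : ℝ) : ℝ :=
  2 * qdr ψ r z * qdz (qdz ψ) r z * r + 3 * qdr ψ r z ^ 2 - 2 * qdz ψ r z ^ 2

def axialFlux (ψ : ℝ → ℝ → ℝ) (r z : ℝ) : ℝ :=
  qdr ψ r z * (4 * qdz ψ r z - 2 * qdr (qdz ψ) r z * r)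

def energyDensity (ψ : ℝ → ℝ → ℝ) (r z : ℝ) : ℝ :=
  r * (qdr (qdr ψ) r z ^ 2 + 2 * qdr (qdz ψ) r z ^ 2 + qdz (qdz ψ) r z ^ 2
    + 9 * (qdr ψ r z ^ 2 / r ^ 2))

variable {ψ Γ : ℝ → ℝ → ℝ}

theorem ContDiff.uncurry_radialFlux (hψ : ContDiff ℝ ∞ (uncurry ψ)) :
    ContDiff ℝ ∞ (uncurry (radialFlux ψ)) := by
  have hr : ContDiff ℝ ∞ fun q : ℝ × ℝ => qdr ψ q.1 q.2 := hψ.uncurry_qdr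
  have hz : ContDiff ℝ ∞ fun q : ℝ × ℝ => qdz ψ q.1 q.2 := hψ.uncurry_qdz
  have hzz : ContDiff ℝ ∞ fun q : ℝ × ℝ => qdz (qdz ψ) q.1 q.2 :=
    hψ.uncurry_qdz.uncurry_qdz
  simp only [uncurry_def, radialFlux]
  fun_prop

theorem ContDiff.uncurry_axialFlux (hψ : ContDiff ℝ ∞ (uncurry ψ)) :
    ContDiff ℝ ∞ (uncurry (axialFlux ψ)) := by
  have hr : ContDiff ℝ ∞ fun q : ℝ × ℝ => qdr ψ q.1 q.2 := hψ.uncurry_qdr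
  have hz : ContDiff ℝ ∞ fun q : ℝ × ℝ => qdz ψ q.1 q.2 := hψ.uncurry_qdz
  have hrz : ContDiff ℝ ∞ fun q : ℝ × ℝ => qdr (qdz ψ) q.1 q.2 :=
    hψ.uncurry_qdz.uncurry_qdr
  simp only [uncurry_def, axialFlux]
  fun_prop

theorem qdr_radialFlux (hψ : ContDiff ℝ ∞ (uncurry ψ)) (r z : ℝ) :
    qdr (radialFlux ψ) r z
      = 2 * (qdr (qdr ψ) r z * qdz (qdz ψ) r z * r + qdr ψ r z * qdr (qdz (qdz ψ)) r z * r
          + qdr ψ r z * qdz (qdz ψ) r z)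
        + 6 * qdr ψ r z * qdr (qdr ψ) r z - 4 * qdz ψ r z * qdr (qdz ψ) r z := by
  have hd {w : ℝ → ℝ → ℝ} (hw : ContDiff ℝ ∞ (uncurry w)) :
      HasDerivAt (fun s => w s z) (qdr w r z) r :=
    hasDerivAt_qdr (hw.differentiable (by simp) _)
  have h : HasDerivAt (fun s => radialFlux ψ s z) _ r :=
    (((hd hψ.uncurry_qdr).const_mul 2).mul (hd hψ.uncurry_qdz.uncurry_qdz)).mul
      (hasDerivAt_id r) |>.add (((hd hψ.uncurry_qdr).pow 2).const_mul 3)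
      |>.sub (((hd hψ.uncurry_qdz).pow 2).const_mul 2)
  rw [qdr, h.deriv]
  simp only [id_eq, Pi.mul_apply, mul_one, Nat.cast_ofNat, Nat.add_one_sub_one, pow_one]
  ring

theorem qdz_axialFlux (hψ : ContDiff ℝ ∞ (uncurry ψ)) (r z : ℝ) :
    qdz (axialFlux ψ) r z
      = qdr (qdz ψ) r z * (4 * qdz ψ r z - 2 * qdr (qdz ψ) r z * r)
        + qdr ψ r z * (4 * qdz (qdz ψ) r z - 2 * qdr (qdz (qdz ψ)) r z * r) := by
  have hd {w : ℝ → ℝ → ℝ} (hw : ContDiff ℝ ∞ (uncurry w)) :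
      HasDerivAt (fun t => w r t) (qdz w r z) z :=
    hasDerivAt_qdz (hw.differentiable (by simp) _)
  have h : HasDerivAt (fun t => axialFlux ψ r t) _ z :=
    (hd hψ.uncurry_qdr).mul (((hd hψ.uncurry_qdz).const_mul 4).sub
      (((hd hψ.uncurry_qdz.uncurry_qdr).const_mul 2).mul_const r))
  rw [qdz, h.deriv, ← qdr_qdz_comm hψ, ← qdr_qdz_comm hψ.uncurry_qdz]

variable {R a : ℝ}

theorem ModStream.contDiff_uncurry (hm : ModStream R a ψ Γ) : ContDiff ℝ ∞ (uncurry ψ) :=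
  contDiff_infty.2 hm.smooth_ψ

theorem ModStream.mul_sq_eq (hm : ModStream R a ψ Γ) {r z : ℝ} (hrz : (r, z) ∈ cylStrip R a) :
    r * Γ r z ^ 2
      = energyDensity ψ r z + qdr (radialFlux ψ) r z + qdz (axialFlux ψ) r z := by
  have hr : r ≠ 0 := hrz.1.1.ne'
  rw [← hm.eqn r z hrz, energyDensity, qdr_radialFlux hm.contDiff_uncurry,
    qdz_axialFlux hm.contDiff_uncurry]
  field_simp
  ring

theorem ModStream.qdr_axis (hm : ModStream R a ψ Γ) (hR : 0 < R) {z : ℝ}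
    (hz : z ∈ Icc (-a) a) : qdr ψ 0 z = 0 := by
  obtain ⟨C, hC⟩ := hm.axis
  have hψr : Continuous (uncurry (qdr ψ)) := continuous_uncurry_qdr (hm.smooth_ψ 1)
  exact eq_zero_of_abs_le_mul_of_continuous (hψr.comp (continuous_id.prodMk continuous_const))
    hR fun r hr => (hC r hr z hz).1

theorem ModStream.radialFlux_sub (hm : ModStream R a ψ Γ) (hR : 0 < R) {z : ℝ}
    (hz : z ∈ Ioo (-a) a) :
    radialFlux ψ R z - radialFlux ψ 0 z = 3 * qdr ψ R z ^ 2 + 2 * qdz ψ 0 z ^ 2 := by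
  have hψz : EqOn (qdz ψ R) 0 (Ioo (-a) a) := fun t ht =>
    deriv_eq_zero_of_eqOn_zero (fun s hs => hm.ψ_lat s (Ioo_subset_Icc_self hs)) isOpen_Ioo ht
  have hψzz : qdz (qdz ψ) R z = 0 := deriv_eq_zero_of_eqOn_zero hψz isOpen_Ioo hz
  simp only [radialFlux, hψz hz, Pi.zero_apply, hψzz, hm.qdr_axis hR (Ioo_subset_Icc_self hz)]
  ring

theorem ModStream.axialFlux_top_bot (hm : ModStream R a ψ Γ) {r : ℝ} (hr : r ∈ Ioo 0 R) :
    axialFlux ψ r a = 0 ∧ axialFlux ψ r (-a) = 0 := by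
  have htop : qdr ψ r a = 0 := deriv_eq_zero_of_eqOn_zero
    (fun s hs => (hm.ψ_top s (Ioo_subset_Icc_self hs)).1) isOpen_Ioo hr
  have hbot : qdr ψ r (-a) = 0 := deriv_eq_zero_of_eqOn_zero
    (fun s hs => (hm.ψ_top s (Ioo_subset_Icc_self hs)).2) isOpen_Ioo hr
  simp [axialFlux, htop, hbot]

theorem ModStream.setIntegral_qdr_radialFlux (hm : ModStream R a ψ Γ) (hR : 0 < R) :
    ∫ q in cylStrip R a, qdr (radialFlux ψ) q.1 q.2
      = 3 * (∫ z in Ioo (-a) a, qdr ψ R z ^ 2) + 2 * ∫ z in Ioo (-a) a, qdz ψ 0 z ^ 2 := by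
  have hψ := hm.contDiff_uncurry
  have hint {f : ℝ → ℝ} (hf : Continuous f) : IntegrableOn f (Ioo (-a) a) :=
    hf.integrableOn_Icc.mono_set Ioo_subset_Icc_self
  have hr : Continuous fun z => qdr ψ R z :=
    (continuous_uncurry_qdr (hm.smooth_ψ 1)).comp (continuous_const.prodMk continuous_id)
  have hz : Continuous fun z => qdz ψ 0 z :=
    hψ.uncurry_qdz.continuous.comp (continuous_const.prodMk continuous_id)
  rw [cylStrip, setIntegral_Ioo_prod_Ioo_qdr (hψ.uncurry_radialFlux.of_le (by simp)) hR.le,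
    setIntegral_congr_fun measurableSet_Ioo fun z hz => hm.radialFlux_sub hR hz,
    integral_add (hint (by fun_prop)) (hint (by fun_prop)),
    integral_const_mul, integral_const_mul]

theorem ModStream.setIntegral_qdz_axialFlux (hm : ModStream R a ψ Γ) (ha : 0 < a) :
    ∫ q in cylStrip R a, qdz (axialFlux ψ) q.1 q.2 = 0 := by
  rw [cylStrip, setIntegral_Ioo_prod_Ioo_qdz
    (hm.contDiff_uncurry.uncurry_axialFlux.of_le (by simp)) (by linarith)]
  have h : EqOn (fun r => axialFlux ψ r a - axialFlux ψ r (-a)) 0 (Ioo 0 R) := fun r hr => by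
    simp [(hm.axialFlux_top_bot hr).1, (hm.axialFlux_top_bot hr).2]
  rw [setIntegral_congr_fun measurableSet_Ioo h]
  simp

theorem ModStream.integrableOn_energyDensity (hm : ModStream R a ψ Γ) :
    IntegrableOn (fun q : ℝ × ℝ => energyDensity ψ q.1 q.2) (cylStrip R a) := by
  have hψ := hm.contDiff_uncurry
  have hΓ : Continuous (uncurry Γ) := (hm.smooth_Γ 0).continuous
  have hcont : Continuous fun q : ℝ × ℝ =>
      q.1 * Γ q.1 q.2 ^ 2 - qdr (radialFlux ψ) q.1 q.2 - qdz (axialFlux ψ) q.1 q.2 :=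
    ((continuous_fst.mul (hΓ.pow 2)).sub
      (continuous_uncurry_qdr (hψ.uncurry_radialFlux.of_le (by simp)))).sub
      (continuous_uncurry_qdz (hψ.uncurry_axialFlux.of_le (by simp)))
  refine hcont.integrableOn_Ioo_prod_Ioo.congr_fun (fun q hq => ?_)
    measurableSet_cylStrip
  dsimp only
  rw [hm.mul_sq_eq hq]
  ring

theorem ModStream.setIntegral_mul_sq_eq (hm : ModStream R a ψ Γ) (hR : 0 < R) (ha : 0 < a) :
    ∫ q in cylStrip R a, q.1 * Γ q.1 q.2 ^ 2
      = (∫ q in cylStrip R a, energyDensity ψ q.1 q.2)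
        + 3 * (∫ z in Ioo (-a) a, qdr ψ R z ^ 2) + 2 * ∫ z in Ioo (-a) a, qdz ψ 0 z ^ 2 := by
  have hψ := hm.contDiff_uncurry
  have hP : IntegrableOn (fun q : ℝ × ℝ => qdr (radialFlux ψ) q.1 q.2) (cylStrip R a) :=
    (continuous_uncurry_qdr (hψ.uncurry_radialFlux.of_le (by simp))).integrableOn_Ioo_prod_Ioo
  have hQ : IntegrableOn (fun q : ℝ × ℝ => qdz (axialFlux ψ) q.1 q.2) (cylStrip R a) :=
    (continuous_uncurry_qdz (hψ.uncurry_axialFlux.of_le (by simp))).integrableOn_Ioo_prod_Ioo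
  have hEP : IntegrableOn
      (fun q : ℝ × ℝ => energyDensity ψ q.1 q.2 + qdr (radialFlux ψ) q.1 q.2)
      (cylStrip R a) :=
    hm.integrableOn_energyDensity.add hP
  rw [setIntegral_congr_fun measurableSet_cylStrip fun q hq => hm.mul_sq_eq hq,
    integral_add hEP hQ,
    integral_add hm.integrableOn_energyDensity hP,
    hm.setIntegral_qdr_radialFlux hR, hm.setIntegral_qdz_axialFlux ha]
  ring

theorem ModStream.setIntegral_le_setIntegral_energyDensity (hm : ModStream R a ψ Γ) :
    ∫ q in cylStrip R a, q.1 * (qdr (qdr ψ) q.1 q.2 ^ 2 + qdr (qdz ψ) q.1 q.2 ^ 2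
        + qdz (qdz ψ) q.1 q.2 ^ 2 + qdr ψ q.1 q.2 ^ 2 / q.1 ^ 2)
      ≤ ∫ q in cylStrip R a, energyDensity ψ q.1 q.2 := by
  refine integral_mono_of_nonneg
    (ae_restrict_of_forall_mem measurableSet_cylStrip fun q hq => ?_)
    hm.integrableOn_energyDensity
    (ae_restrict_of_forall_mem measurableSet_cylStrip fun q hq => ?_)
  · have : 0 < q.1 := hq.1.1
    positivity
  · have : 0 ≤ qdr ψ q.1 q.2 ^ 2 / q.1 ^ 2 := by positivity
    have : 0 ≤ qdr (qdz ψ) q.1 q.2 ^ 2 := sq_nonneg _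
    exact mul_le_mul_of_nonneg_left (by linarith) hq.1.1.le

end ModifiedStream

/-- `H²` elliptic estimate for the modified stream function, Lemma 3.2:
there is `c > 0`, depending only on the cylinder, such that
`∫_Ω (ψ₁,rr² + ψ₁,rz² + ψ₁,zz² + ψ₁,r²/r²) + ∫_{−a}^a (ψ₁,z²|_{r=0} + ψ₁,r²|_{r=R}) dz
  ≤ c |Γ|²_{2,Ω}`. -/
theorem stmt_7 (R a : ℝ) (hR : 0 < R) (ha : 0 < a) :
    ∃ c > 0, ∀ ψ Γ : ℝ → ℝ → ℝ, ModStream R a ψ Γ →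
      (∫ q, ((qdr (qdr ψ) q.1 q.2) ^ 2 + (qdr (qdz ψ) q.1 q.2) ^ 2
          + (qdz (qdz ψ) q.1 q.2) ^ 2 + (qdr ψ q.1 q.2) ^ 2 / q.1 ^ 2) ∂(cylMeas R a))
      + (∫ z in Ioo (-a) a, (qdz ψ 0 z) ^ 2)
      + (∫ z in Ioo (-a) a, (qdr ψ R z) ^ 2)
      ≤ c * ∫ q, (Γ q.1 q.2) ^ 2 ∂(cylMeas R a) := by
  refine ⟨1, one_pos, fun ψ Γ hm => ?_⟩
  have hle := hm.setIntegral_le_setIntegral_energyDensity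
  have hz : 0 ≤ ∫ z in Ioo (-a) a, qdz ψ 0 z ^ 2 := integral_nonneg fun _ => sq_nonneg _
  have hr : 0 ≤ ∫ z in Ioo (-a) a, qdr ψ R z ^ 2 := integral_nonneg fun _ => sq_nonneg _
  rw [integral_cylMeas, integral_cylMeas, hm.setIntegral_mul_sq_eq hR ha]
  nlinarith [pi_gt_three]
end
end
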